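/- Let p be an odd prime, m ≥ 0 and N ≥ 1 integers, and let n₁, n₂ be coprime squarefree positive integers (coprime to p) all of whose prime divisors are ≡ 1 (mod p^N); set n := n₁n₂. Then the canonical map F_m(n₁)^×/(F_m(n₁)^×)^{p^N} → (F_m(n)^×/(F_m(n)^×)^{p^N})^{Gal(F_m(n)/F_m(n₁))} is an isomorphism (i.e., bijective). -/

import Mathlib

/-!
Since `F_m(n)` is real and `p^N` is odd, `F_m(n)` contains no nontrivial `p^N`-th root of unity, so
`x ↦ x^{p^N}` is injective on its units. The extension `F_m(n)/F_m(n₁)` is finite Galois, being a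
subextension of the abelian extension `ℚ(μ_{p^{m+1}n})/ℚ`; write `G` for its Galois group.

Injectivity: if `u = w^{p^N}` with `u ∈ F_m(n₁)`, then every conjugate of `w` has the same
`p^N`-th power as `w`, so `w` is `G`-invariant and lies in `F_m(n₁)`.
Surjectivity onto the invariants: if `σw/w = g(σ)^{p^N}` for all `σ ∈ G`, uniqueness of
`p^N`-th roots makes `g` a 1-cocycle, Hilbert 90 writes `g(σ) = σβ/β`, and then `w/β^{p^N}` is
`G`-invariant, hence comes from `F_m(n₁)`.
-/

/-- The quotient of a commutative group `G` by the subgroup of `n`-th powers. -/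
abbrev powQuot (G : Type*) [CommGroup G] (n : ℕ) : Type _ :=
  G ⧸ (powMonoidHom n : G →* G).range

/-- The map `G/(Gⁿ) → H/(Hⁿ)` induced by a group homomorphism `f : G →* H`. -/
def powQuotMap {G H : Type*} [CommGroup G] [CommGroup H] (n : ℕ) (f : G →* H) :
    powQuot G n →* powQuot H n :=
  QuotientGroup.map _ _ f (by
    rintro x ⟨y, rfl⟩
    exact ⟨f y, by simp [powMonoidHom, map_pow]⟩)

/-- `Fmn p m n` is the maximal totally real subfield of `ℚ(μ_{p^{m+1} n}) ⊂ ℂ`, realized as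
the intersection of the subfield of `ℂ` generated by the `p^{m+1}n`-th roots of unity with
the real numbers (the fixed field of complex conjugation). -/
noncomputable def Fmn (p m n : ℕ) : Subfield ℂ :=
  Subfield.closure {z : ℂ | z ^ (p ^ (m + 1) * n) = 1} ⊓ Complex.ofRealHom.fieldRange

/-- Monotonicity of `Fmn` in the conductor. -/
lemma Fmn_le (p : ℕ) {m₁ m₂ a b : ℕ} (h : p ^ (m₁ + 1) * a ∣ p ^ (m₂ + 1) * b) :
    Fmn p m₁ a ≤ Fmn p m₂ b := by
  refine inf_le_inf_right _ (Subfield.closure_mono ?_)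
  rintro z hz
  obtain ⟨c, hc⟩ := h
  simp only [Set.mem_setOf_eq] at hz ⊢
  rw [hc, pow_mul, hz, one_pow]

section PowQuot

variable {G : Type*} [CommGroup G] {n : ℕ}

lemma powQuot_mk_eq_mk_iff {a b : G} : (a : powQuot G n) = b ↔ ∃ z : G, z ^ n = a⁻¹ * b :=
  QuotientGroup.eq

lemma powQuot_mk_eq_one_iff {a : G} : (a : powQuot G n) = 1 ↔ ∃ z : G, z ^ n = a :=
  QuotientGroup.eq_one_iff a

end PowQuot

lemma Units.pow_left_injective_of_rootsOfUnity_eq_bot {M : Type*} [CommMonoid M] {q : ℕ}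
    (hq : rootsOfUnity q M = ⊥) : Function.Injective fun a : Mˣ => a ^ q := by
  rwa [rootsOfUnity_eq_ker, MonoidHom.ker_eq_bot_iff] at hq

section Galois

variable {L M : Type*} [Field L] [Field M] [Algebra L M] {q : ℕ}

lemma smul_units_map_algebraMap (σ : Gal(M/L)) (u : Lˣ) :
    σ • Units.map (algebraMap L M).toMonoidHom u = Units.map (algebraMap L M).toMonoidHom u :=
  Units.ext (σ.commutes u)

variable [FiniteDimensional L M] [IsGalois L M]

lemma exists_units_map_algebraMap_eq_of_forall_smul_eq {w : Mˣ}
    (hw : ∀ σ : Gal(M/L), σ • w = w) : ∃ u : Lˣ, Units.map (algebraMap L M).toMonoidHom u = w := by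
  obtain ⟨y, hy⟩ := (IsGalois.mem_range_algebraMap_iff_fixed (w : M)).2
    fun σ => congrArg Units.val (hw σ)
  have hy0 : y ≠ 0 := by
    rintro rfl
    exact w.ne_zero (by simpa using hy.symm)
  exact ⟨Units.mk0 y hy0, Units.ext hy⟩

theorem injective_powQuotMap_units_map_algebraMap (hq : rootsOfUnity q M = ⊥) :
    Function.Injective (powQuotMap q (Units.map (algebraMap L M).toMonoidHom)) := by
  have hpow := Units.pow_left_injective_of_rootsOfUnity_eq_bot hq
  refine (injective_iff_map_eq_one _).2 fun y hy => ?_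
  induction y using QuotientGroup.induction_on with | H u => ?_
  obtain ⟨w, hw⟩ := powQuot_mk_eq_one_iff.1 hy
  have hfix : ∀ σ : Gal(M/L), σ • w = w := fun σ =>
    hpow (by simp only [← smul_pow', hw, smul_units_map_algebraMap])
  obtain ⟨u', rfl⟩ := exists_units_map_algebraMap_eq_of_forall_smul_eq hfix
  exact powQuot_mk_eq_one_iff.2
    ⟨u', Units.map_injective (algebraMap L M).injective (by rw [map_pow, hw])⟩

theorem exists_pow_mul_units_map_algebraMap_eq (hq : rootsOfUnity q M = ⊥) {w : Mˣ}
    (hw : ∀ σ : Gal(M/L), ∃ z : Mˣ, z ^ q = σ • w / w) :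
    ∃ (β : Mˣ) (u : Lˣ), β ^ q * Units.map (algebraMap L M).toMonoidHom u = w := by
  have hpow := Units.pow_left_injective_of_rootsOfUnity_eq_bot hq
  choose g hg using hw
  have hcocycle : groupCohomology.IsMulCocycle₁ g := fun σ τ =>
    hpow <| by
      dsimp only
      rw [mul_pow, ← smul_pow', hg, hg, hg, mul_smul, smul_div', div_mul_div_cancel]
  obtain ⟨β, hβ⟩ := groupCohomology.isMulCoboundary₁_of_isMulCocycle₁_of_aut_to_units g hcocycle
  have hfix : ∀ σ : Gal(M/L), σ • (w / β ^ q) = w / β ^ q := by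
    intro σ
    have hσw : σ • w = g σ ^ q * w := by rw [hg, div_mul_cancel]
    have hσβ : σ • β = g σ * β := by rw [← hβ, div_mul_cancel]
    rw [smul_div', smul_pow', hσw, hσβ, mul_pow, mul_div_mul_left_eq_div]
  obtain ⟨u, hu⟩ := exists_units_map_algebraMap_eq_of_forall_smul_eq hfix
  exact ⟨β, u, by rw [hu, mul_div_cancel]⟩

theorem range_powQuotMap_units_map_algebraMap (hq : rootsOfUnity q M = ⊥) :
    Set.range (powQuotMap q (Units.map (algebraMap L M).toMonoidHom)) =
      {y : powQuot Mˣ q | ∀ σ : M ≃+* M,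
        (∀ x : L, σ (algebraMap L M x) = algebraMap L M x) →
        powQuotMap q (Units.map σ.toRingHom.toMonoidHom) y = y} := by
  ext y
  constructor
  · rintro ⟨x, rfl⟩ σ hσ
    induction x using QuotientGroup.induction_on with | H u => ?_
    exact congrArg _ (Units.ext (hσ u))
  · intro hy
    induction y using QuotientGroup.induction_on with | H w => ?_
    have hw : ∀ σ : Gal(M/L), ∃ z : Mˣ, z ^ q = σ • w / w := fun σ => by
      obtain ⟨z, hz⟩ := powQuot_mk_eq_mk_iff.1 (hy σ.toRingEquiv σ.commutes)
      exact ⟨z⁻¹, by rw [inv_pow, hz, mul_inv_rev, inv_inv, ← div_eq_inv_mul]; rfl⟩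
    obtain ⟨β, u, rfl⟩ := exists_pow_mul_units_map_algebraMap_eq hq hw
    exact ⟨u, powQuot_mk_eq_mk_iff.2 ⟨β, eq_inv_mul_iff_mul_eq.2 (mul_comm _ _)⟩⟩

end Galois

lemma rootsOfUnity_eq_bot_of_le_fieldRange_ofReal {K : Subfield ℂ}
    (hK : K ≤ Complex.ofRealHom.fieldRange) {q : ℕ} (hq : Odd q) : rootsOfUnity q K = ⊥ := by
  refine (Subgroup.eq_bot_iff_forall _).2 fun ζ hζ => ?_
  obtain ⟨r, hr⟩ := hK (ζ : K).2
  have hζq : ((ζ : K) : ℂ) ^ q = 1 := by exact_mod_cast (mem_rootsOfUnity' q ζ).1 hζ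
  have hr1 : r ^ q = 1 := by
    rw [← hr, Complex.ofRealHom_eq_coe] at hζq
    exact_mod_cast hζq
  refine Units.ext (Subtype.ext ?_)
  rw [← hr, hq.pow_injective (hr1.trans (one_pow q).symm)]
  simp

section SubfieldOfAbelian

variable {L K E : Type*} [Field L] [Field K] [Field E] [CharZero L] [CharZero K] [Algebra L K]
  [Algebra ℚ E]

theorem IsAbelianGalois.of_ringHom [IsAbelianGalois ℚ E] (f : K →+* E) : IsAbelianGalois L K :=
  have := IsAbelianGalois.of_algHom f.toRatAlgHom
  .tower_top ℚ L K

theorem FiniteDimensional.of_ringHom [FiniteDimensional ℚ E] (f : K →+* E) :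
    FiniteDimensional L K :=
  have : FiniteDimensional ℚ K := .of_injective f.toRatAlgHom.toLinearMap f.injective
  .of_restrictScalars_finite ℚ L K

end SubfieldOfAbelian

open IntermediateField in
lemma Fmn_le_adjoin_rootsOfUnity (p m n : ℕ) (hk : p ^ (m + 1) * n ≠ 0) :
    Fmn p m n ≤
      (adjoin ℚ {b : ℂ | ∃ k ∈ ({p ^ (m + 1) * n} : Set ℕ), k ≠ 0 ∧ b ^ k = 1}).toSubfield :=
  inf_le_left.trans <| Subfield.closure_le.2 fun _ hz => subset_adjoin _ _ ⟨_, rfl, hk, hz⟩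

theorem statement3_general (p : ℕ) (hpodd : Odd p) (m N : ℕ)
    (n₁ n₂ : ℕ) (h₁ : 0 < n₁) (h₂ : 0 < n₂) :
    let ι := Subfield.inclusion
      (Fmn_le p (mul_dvd_mul_left (p ^ (m + 1)) (dvd_mul_right n₁ n₂)))
    let j := powQuotMap (p ^ N) (Units.map ι.toMonoidHom)
    Function.Injective j ∧
    Set.range j = {y : powQuot (↥(Fmn p m (n₁ * n₂)))ˣ (p ^ N) |
      ∀ σ : ↥(Fmn p m (n₁ * n₂)) ≃+* ↥(Fmn p m (n₁ * n₂)),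
        (∀ x : ↥(Fmn p m n₁), σ (ι x) = ι x) →
        powQuotMap (p ^ N) (Units.map σ.toRingHom.toMonoidHom) y = y} := by
  intro ι j
  set k := p ^ (m + 1) * (n₁ * n₂)
  have hk : k ≠ 0 := by have := hpodd.pos; positivity
  let E := IntermediateField.adjoin ℚ {b : ℂ | ∃ k' ∈ ({k} : Set ℕ), k' ≠ 0 ∧ b ^ k' = 1}
  have : IsCyclotomicExtension {k} ℚ E :=
    IntermediateField.isCyclotomicExtension_adjoin_of_exists_isPrimitiveRoot _ _ _
      fun n _ hn => ⟨_, Complex.isPrimitiveRoot_exp n hn⟩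
  have : NeZero k := ⟨hk⟩
  have := IsCyclotomicExtension.isAbelianGalois {k} ℚ E
  have := IsCyclotomicExtension.finite_of_singleton k ℚ E
  let f : Fmn p m (n₁ * n₂) →+* E := Subfield.inclusion (Fmn_le_adjoin_rootsOfUnity p m _ hk)
  let _ : Algebra (Fmn p m n₁) (Fmn p m (n₁ * n₂)) := ι.toAlgebra
  have := IsAbelianGalois.of_ringHom (L := Fmn p m n₁) f
  have := FiniteDimensional.of_ringHom (L := Fmn p m n₁) f
  have hroots := rootsOfUnity_eq_bot_of_le_fieldRange_ofReal (K := Fmn p m (n₁ * n₂))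
    inf_le_right (hpodd.pow (n := N))
  exact ⟨injective_powQuotMap_units_map_algebraMap hroots,
    range_powQuotMap_units_map_algebraMap hroots⟩

/-- (Lemma 4.6.)  Let `p` be an odd prime, `m ≥ 0`, `N ≥ 1`, and `n₁, n₂`
coprime squarefree positive integers coprime to `p`, all of whose prime divisors are
`≡ 1 (mod p^N)`; put `n = n₁n₂`.  Then the canonical map
`F_m(n₁)^×/p^N → (F_m(n)^×/p^N)^{Gal(F_m(n)/F_m(n₁))}` is bijective. -/
theorem statement3 (p : ℕ) (hp : p.Prime) (hpodd : Odd p) (m N : ℕ) (hN : 1 ≤ N)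
    (n₁ n₂ : ℕ) (h₁ : 0 < n₁) (h₂ : 0 < n₂) (hsq₁ : Squarefree n₁) (hsq₂ : Squarefree n₂)
    (hcop : Nat.Coprime n₁ n₂) (hp₁ : ¬ p ∣ n₁) (hp₂ : ¬ p ∣ n₂)
    (hmod : ∀ ℓ : ℕ, ℓ.Prime → ℓ ∣ n₁ * n₂ → ℓ % p ^ N = 1) :
    let ι := Subfield.inclusion
      (Fmn_le p (mul_dvd_mul_left (p ^ (m + 1)) (dvd_mul_right n₁ n₂)))
    let j := powQuotMap (p ^ N) (Units.map ι.toMonoidHom)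
    Function.Injective j ∧
    Set.range j = {y : powQuot (↥(Fmn p m (n₁ * n₂)))ˣ (p ^ N) |
      ∀ σ : ↥(Fmn p m (n₁ * n₂)) ≃+* ↥(Fmn p m (n₁ * n₂)),
        (∀ x : ↥(Fmn p m n₁), σ (ι x) = ι x) →
        powQuotMap (p ^ N) (Units.map σ.toRingHom.toMonoidHom) y = y} :=
  statement3_general p hpodd m N n₁ n₂ h₁ h₂
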